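/- For every β > 0, the weighted integral ∫_0^T e^{-βr} ‖S(r)i‖_{L(ℝ^d;V)} dr ≤ (C/√β)·max(1/β, 1/2)^{1/2} for a constant C depending only on μ; in particular this quantity tends to 0 as β → ∞. -/

import Mathlib

open MeasureTheory Set ENNReal Filter

/-- The weight function `ω(x) = 1 ∧ x^{-1/2}` (with `ω(x) = 1` for `x ≤ 0`). -/
noncomputable def omg (x : ℝ) : ℝ := if x ≤ 0 then 1 else min 1 (x ^ (-(1:ℝ)/2))

/-!
Since `x e^{-2rx} ≤ 1/(2r)`, the integrand defining `‖S(r)i‖²` is at most `(1 + 1/r) ω(x)`, so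
`‖S(r)i‖ ≤ √M (1 + r^{-1/2})` with `M = ∫ ω dμ`. Integrating against `e^{-βr}` and extending the
range to `(0, ∞)` gives at most `√M (Γ(1)/β + Γ(1/2)/√β) = √M (1/β + √π/√β)`, which is of the
claimed form `C β^{-1/2} max(1/β, 1/2)^{1/2}` and tends to `0`.
-/

open Real

lemma omg_nonneg (x : ℝ) : 0 ≤ omg x := by
  unfold omg
  split_ifs with hx
  · exact zero_le_one
  · exact le_min zero_le_one (rpow_nonneg (not_le.mp hx).le _)

lemma measurable_omg : Measurable omg :=
  Measurable.ite (measurableSet_le measurable_id measurable_const) measurable_const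
    (measurable_const.min (by fun_prop))

lemma exp_neg_mul_mul_one_add_le {a x : ℝ} (ha : 0 < a) (hx : 0 ≤ x) :
    exp (-(a * x)) * (1 + x) ≤ 1 + 1 / a := by
  have hexp_le_one : exp (-(a * x)) ≤ 1 := exp_le_one_iff.2 (by nlinarith)
  have hmul_exp_le : a * x * exp (-(a * x)) ≤ 1 := by
    calc a * x * exp (-(a * x)) ≤ exp (a * x) * exp (-(a * x)) := by
          gcongr; linarith [add_one_le_exp (a * x)]
      _ = 1 := by rw [← exp_add, add_neg_cancel, exp_zero]
  have hx_exp_le : x * exp (-(a * x)) ≤ 1 / a := by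
    rw [le_div_iff₀ ha]; linarith
  nlinarith

lemma setIntegral_exp_neg_mul_one_add_mul_le {μ : Measure ℝ} {g : ℝ → ℝ}
    (hg : Integrable g (μ.restrict (Ici 0))) (hg0 : ∀ x, 0 ≤ g x) {a : ℝ} (ha : 0 < a) :
    ∫ x in Ici (0:ℝ), exp (-(a * x)) * ((1 + x) * g x) ∂μ ≤
      (1 + 1 / a) * ∫ x in Ici (0:ℝ), g x ∂μ := by
  rw [← integral_const_mul]
  refine integral_mono_of_nonneg ?_ (hg.const_mul _) ?_ <;>
    refine (ae_restrict_iff' measurableSet_Ici).2 (ae_of_all _ fun x (hx : 0 ≤ x) => ?_)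
  · have := hg0 x
    positivity
  · show exp (-(a * x)) * ((1 + x) * g x) ≤ (1 + 1 / a) * g x
    rw [← mul_assoc]
    exact mul_le_mul_of_nonneg_right (exp_neg_mul_mul_one_add_le ha hx) (hg0 x)

lemma sqrt_one_add_one_div_mul_le {r M : ℝ} (hr : 0 < r) (hM : 0 ≤ M) :
    √((1 + 1 / r) * M) ≤ √M * (1 + 1 / √r) := by
  have hsqrt_one_add : √(1 + 1 / r) ≤ 1 + 1 / √r := by
    have hsq : (1 / √r) ^ 2 = 1 / r := by rw [div_pow, one_pow, sq_sqrt hr.le]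
    rw [sqrt_le_iff]
    refine ⟨by positivity, ?_⟩
    nlinarith [show 0 ≤ 1 / √r by positivity]
  rw [sqrt_mul' _ hM, mul_comm (√M)]
  exact mul_le_mul_of_nonneg_right hsqrt_one_add (sqrt_nonneg M)

lemma integrableOn_rpow_mul_exp_neg_mul {a β : ℝ} (ha : 0 < a) (hβ : 0 < β) :
    IntegrableOn (fun r => r ^ (a - 1) * exp (-(β * r))) (Ioi 0) :=
  Integrable.of_integral_ne_zero <| by
    rw [integral_rpow_mul_exp_neg_mul_Ioi ha hβ]
    exact (mul_pos (rpow_pos_of_pos (one_div_pos.2 hβ) a) (Gamma_pos_of_pos ha)).ne'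

lemma setIntegral_Ioc_rpow_mul_exp_neg_mul_le {a β : ℝ} (ha : 0 < a) (hβ : 0 < β) (T : ℝ) :
    ∫ r in Ioc (0:ℝ) T, r ^ (a - 1) * exp (-(β * r)) ≤ (1 / β) ^ a * Gamma a := by
  rw [← integral_rpow_mul_exp_neg_mul_Ioi ha hβ]
  refine setIntegral_mono_set (integrableOn_rpow_mul_exp_neg_mul ha hβ) ?_
    Ioc_subset_Ioi_self.eventuallyLE
  exact (ae_restrict_iff' measurableSet_Ioi).2 (ae_of_all _ fun r (hr : 0 < r) => by positivity)

lemma setIntegral_exp_neg_mul_sqrt_le {F : ℝ → ℝ} {M : ℝ} (hM : 0 ≤ M)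
    (hF : ∀ r, 0 < r → F r ≤ (1 + 1 / r) * M) {β : ℝ} (hβ : 0 < β) (T : ℝ) :
    ∫ r in Ioc (0:ℝ) T, exp (-(β * r)) * √(F r) ≤ √M * (1 / β + √π / √β) := by
  set G : ℝ → ℝ → ℝ := fun a r => r ^ (a - 1) * exp (-(β * r))
  have hG : ∀ a, 0 < a → IntegrableOn (G a) (Ioc 0 T) := fun a ha =>
    (integrableOn_rpow_mul_exp_neg_mul ha hβ).mono_set Ioc_subset_Ioi_self
  have hpointwise : ∀ r ∈ Ioc (0:ℝ) T,
      exp (-(β * r)) * √(F r) ≤ √M * (G 1 r + G (1 / 2) r) := fun r hr => by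
    have hG_half : G (1 / 2) r = exp (-(β * r)) * (1 / √r) := by
      simp only [G]
      rw [show (1:ℝ) / 2 - 1 = -(1 / 2) by norm_num, rpow_neg hr.1.le, ← sqrt_eq_rpow,
        mul_comm, one_div]
    calc exp (-(β * r)) * √(F r) ≤ exp (-(β * r)) * (√M * (1 + 1 / √r)) := by
          gcongr
          exact (sqrt_le_sqrt (hF r hr.1)).trans (sqrt_one_add_one_div_mul_le hr.1 hM)
      _ = √M * (G 1 r + G (1 / 2) r) := by
          rw [hG_half]; simp only [G, sub_self, Real.rpow_zero]; ring
  calc ∫ r in Ioc (0:ℝ) T, exp (-(β * r)) * √(F r)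
      ≤ ∫ r in Ioc (0:ℝ) T, √M * (G 1 r + G (1 / 2) r) :=
        integral_mono_of_nonneg (ae_of_all _ fun r => by positivity)
          (((hG 1 one_pos).add (hG _ one_half_pos)).const_mul _)
          ((ae_restrict_iff' measurableSet_Ioc).2 (ae_of_all _ hpointwise))
    _ = √M * ((∫ r in Ioc (0:ℝ) T, G 1 r) + ∫ r in Ioc (0:ℝ) T, G (1 / 2) r) := by
        rw [integral_const_mul, integral_add (hG 1 one_pos) (hG _ one_half_pos)]
    _ ≤ √M * ((1 / β) ^ (1:ℝ) * Gamma 1 + (1 / β) ^ (1 / 2 : ℝ) * Gamma (1 / 2)) := by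
        gcongr
        · exact setIntegral_Ioc_rpow_mul_exp_neg_mul_le one_pos hβ T
        · exact setIntegral_Ioc_rpow_mul_exp_neg_mul_le one_half_pos hβ T
    _ = √M * (1 / β + √π / √β) := by
        rw [Real.rpow_one, Gamma_one, Gamma_one_half_eq, ← sqrt_eq_rpow, sqrt_div' _ hβ.le,
          sqrt_one]
        ring

lemma one_div_add_sqrt_pi_div_sqrt_le {β : ℝ} (hβ : 0 < β) :
    1 / β + √π / √β ≤ (1 + √(2 * π)) / √β * √(max (1 / β) (1 / 2)) := by
  set m := √(max (1 / β) (1 / 2))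
  have hm_inv : 1 / √β ≤ m := by
    rw [← sqrt_one, ← sqrt_div' _ hβ.le]
    exact sqrt_le_sqrt (le_max_left _ _)
  have hm_half : √(1 / 2) ≤ m := sqrt_le_sqrt (le_max_right _ _)
  have hpi : √π = √(2 * π) * √(1 / 2) := by
    rw [← sqrt_mul (by positivity)]; ring_nf
  calc 1 / β + √π / √β = (1 / √β + √(2 * π) * √(1 / 2)) / √β := by
        rw [hpi]; field_simp; linear_combination mul_self_sqrt hβ.le
    _ ≤ (m + √(2 * π) * m) / √β := by gcongr
    _ = (1 + √(2 * π)) / √β * m := by ring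

lemma tendsto_div_sqrt_mul_sqrt_max (C : ℝ) :
    Tendsto (fun β : ℝ => C / √β * √(max (1 / β) (1 / 2))) atTop (nhds 0) := by
  have hdecay : Tendsto (fun β : ℝ => C / √β) atTop (nhds 0) :=
    tendsto_sqrt_atTop.const_div_atTop C
  have hbounded : Tendsto (fun β : ℝ => √(max (1 / β) (1 / 2))) atTop (nhds √(max 0 (1 / 2))) :=
    (continuous_sqrt.tendsto _).comp ((tendsto_id.const_div_atTop 1).max tendsto_const_nhds)
  simpa using hdecay.mul hbounded

theorem stmt_14_general (μ : Measure ℝ) (T : ℝ)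
    (hμ : Integrable (fun x => omg x + 1 / ((1 + x) * omg x)) (μ.restrict (Ici 0))) :
    ∃ C : ℝ, 0 ≤ C ∧
      (∀ β : ℝ, 0 < β →
        (∫ r in Ioc (0:ℝ) T,
            Real.exp (-(β * r)) *
              Real.sqrt (∫ x in Ici (0:ℝ),
                Real.exp (-(2 * r * x)) * ((1 + x) * omg x) ∂μ)) ≤
          C / Real.sqrt β * Real.sqrt (max (1 / β) (1 / 2))) ∧
      Tendsto (fun β : ℝ =>
          ∫ r in Ioc (0:ℝ) T,
            Real.exp (-(β * r)) *
              Real.sqrt (∫ x in Ici (0:ℝ),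
                Real.exp (-(2 * r * x)) * ((1 + x) * omg x) ∂μ))
        atTop (nhds 0) := by
  have hω : Integrable omg (μ.restrict (Ici 0)) := by
    refine integrable_left_of_integrable_add_of_nonneg measurable_omg.aestronglyMeasurable
      (ae_of_all _ omg_nonneg) ?_ hμ
    refine (ae_restrict_iff' measurableSet_Ici).2 (ae_of_all _ fun x (hx : 0 ≤ x) => ?_)
    have := omg_nonneg x
    positivity
  set M := ∫ x in Ici (0:ℝ), omg x ∂μ
  have hM : 0 ≤ M := setIntegral_nonneg measurableSet_Ici fun x _ => omg_nonneg x
  have hF : ∀ r : ℝ, 0 < r →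
      ∫ x in Ici (0:ℝ), exp (-(2 * r * x)) * ((1 + x) * omg x) ∂μ ≤ (1 + 1 / r) * M :=
    fun r hr => (setIntegral_exp_neg_mul_one_add_mul_le hω omg_nonneg (by positivity)).trans
      (by gcongr; linarith)
  set C := √M * (1 + √(2 * π))
  have hbound : ∀ β : ℝ, 0 < β →
      ∫ r in Ioc (0:ℝ) T, exp (-(β * r)) *
          √(∫ x in Ici (0:ℝ), exp (-(2 * r * x)) * ((1 + x) * omg x) ∂μ) ≤
        C / √β * √(max (1 / β) (1 / 2)) := fun β hβ =>
    calc _ ≤ √M * (1 / β + √π / √β) := setIntegral_exp_neg_mul_sqrt_le hM hF hβ T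
      _ ≤ √M * ((1 + √(2 * π)) / √β * √(max (1 / β) (1 / 2))) := by
          gcongr; exact one_div_add_sqrt_pi_div_sqrt_le hβ
      _ = _ := by ring
  refine ⟨C, by positivity, hbound, squeeze_zero' ?_ ((eventually_gt_atTop 0).mono hbound)
    (tendsto_div_sqrt_mul_sqrt_max C)⟩
  exact Eventually.of_forall fun β => setIntegral_nonneg measurableSet_Ioc fun r _ => by positivity

/-- For every `β > 0`,
`∫_0^T e^{-βr} ‖S(r)i‖_{L(ℝ^d;V)} dr ≤ (C/√β) max (1/β) (1/2) ^ (1/2)` with `C`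
depending only on `μ`; in particular this quantity tends to `0` as `β → ∞`. -/
theorem stmt_14 (μ : Measure ℝ) (T : ℝ) (hT : 0 < T)
    (hμ : Integrable (fun x => omg x + 1 / ((1 + x) * omg x)) (μ.restrict (Ici 0))) :
    ∃ C : ℝ, 0 ≤ C ∧
      (∀ β : ℝ, 0 < β →
        (∫ r in Ioc (0:ℝ) T,
            Real.exp (-(β * r)) *
              Real.sqrt (∫ x in Ici (0:ℝ),
                Real.exp (-(2 * r * x)) * ((1 + x) * omg x) ∂μ)) ≤
          C / Real.sqrt β * Real.sqrt (max (1 / β) (1 / 2))) ∧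
      Tendsto (fun β : ℝ =>
          ∫ r in Ioc (0:ℝ) T,
            Real.exp (-(β * r)) *
              Real.sqrt (∫ x in Ici (0:ℝ),
                Real.exp (-(2 * r * x)) * ((1 + x) * omg x) ∂μ))
        atTop (nhds 0) :=
  stmt_14_general μ T hμ
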